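/- Semigroup (Chapman–Kolmogorov) property of the Ehrenfest transition probabilities: for all i, j ∈ {0,1,…,N} and all s, t ≥ 0, p_{ij}(s+t) = Σ_{k=0}^{N} p_{ik}(s) · p_{kj}(t). -/

import Mathlib

/-!
Write `w_x = C(N,x) p^x q^(N-x)` and `ρ_j = C(N,j) (p/q)^j`, so that
`p_{ij}(t) = ρ_j Σ_x w_x K_i(x) K_j(x) e^{-λ(α+β)xt}`. In the product `Σ_k p_{ik}(s) p_{kj}(t)`
the summation over `k` only meets `Σ_k ρ_k K_k(x) K_k(y)`, which by the dual orthogonality of the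
Krawtchouk polynomials is `δ_{xy} / w_x`; the double sum over `x, y` then collapses to the diagonal,
where `e^{-cxs} e^{-cxt} = e^{-cx(s+t)}`.

Dual orthogonality is ordinary orthogonality `Σ_x w_x K_m(x) K_n(x) = δ_{mn} / ρ_n` read through the
self-duality `K_k(x) = K_x(k)`. Ordinary orthogonality is the coefficient of `u^m z^n` in
`Σ_x w_x G_x(u) G_x(z) = (1 + (q/p) u z)^N`, where
`G_x(z) = (1+z)^(N-x) (1 - (q/p) z)^x = Σ_n C(N,n) K_n(x) z^n` and the identity is the binomial
theorem applied to `p (1 - (q/p) u)(1 - (q/p) z) + q (1+u)(1+z) = 1 + (q/p) u z`.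
-/

open Finset

/-- The Krawtchouk polynomial `K_l(x; N; p)`, defined via the hypergeometric sum. -/
noncomputable def krawtchouk (N : ℕ) (p : ℝ) (l x : ℕ) : ℝ :=
  ∑ k ∈ Finset.range (N + 1),
    ((ascPochhammer ℝ k).eval (-(l : ℝ)) * (ascPochhammer ℝ k).eval (-(x : ℝ))) /
      ((ascPochhammer ℝ k).eval (-(N : ℝ)) * (Nat.factorial k : ℝ)) * (1 / p) ^ k

/-- Transition probabilities `p_{ij}(t)` of the continuous-time Ehrenfest process,
where `p = α/(α+β)` and `q = 1 - p`. -/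
noncomputable def ehrenfestP (N : ℕ) (p q lam α β : ℝ) (i j : ℕ) (t : ℝ) : ℝ :=
  (N.choose j : ℝ) * (p / q) ^ j *
    ∑ x ∈ Finset.range (N + 1),
      (N.choose x : ℝ) * p ^ x * q ^ (N - x) * krawtchouk N p i x * krawtchouk N p j x *
        Real.exp (-(lam * (α + β) * (x : ℝ) * t))

open Polynomial

lemma ascPochhammer_eval_neg_natCast {R : Type*} [Ring R] (m k : ℕ) :
    (ascPochhammer R k).eval (-(m : R)) = (-1) ^ k * (k.factorial * m.choose k : ℕ) := by
  rw [ascPochhammer_eval_neg_eq_descPochhammer, descPochhammer_eval_eq_descFactorial,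
    Nat.descFactorial_eq_factorial_mul_choose]

lemma krawtchouk_eq_sum_choose (N : ℕ) (p : ℝ) (l x : ℕ) :
    krawtchouk N p l x =
      ∑ k ∈ range (N + 1), (-p⁻¹) ^ k * l.choose k * x.choose k / N.choose k := by
  refine sum_congr rfl fun k hk => ?_
  have hNk : (N.choose k : ℝ) ≠ 0 := by
    exact_mod_cast (Nat.choose_pos (mem_range_succ_iff.mp hk)).ne'
  have hk : (k.factorial : ℝ) ≠ 0 := by positivity
  simp only [ascPochhammer_eval_neg_natCast, Nat.cast_mul]
  field_simp
  ring

lemma krawtchouk_comm (N : ℕ) (p : ℝ) (l x : ℕ) : krawtchouk N p l x = krawtchouk N p x l :=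
  sum_congr rfl fun _ _ => by rw [mul_comm ((ascPochhammer ℝ _).eval _)]

lemma coeff_one_add_C_mul_X_pow {R : Type*} [CommSemiring R] (a : R) (N n : ℕ) :
    ((1 + C a * X) ^ N).coeff n = N.choose n * a ^ n := by
  rw [add_comm, add_pow]
  simp only [one_pow, mul_one, mul_pow, ← C_pow, finsetSum_coeff, coeff_mul_natCast, mul_assoc,
    coeff_C_mul, coeff_X_pow, ite_mul, one_mul, zero_mul, mul_ite, mul_zero, sum_ite_eq, mem_range]
  split_ifs with h
  · ring
  · rw [Nat.choose_eq_zero_of_lt (by omega), Nat.cast_zero, zero_mul]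

/-- `1 + X - X/p` is `1 - (q/p) X` for `q = 1 - p`, written without `q`. -/
noncomputable def krawtchoukGenFun (N : ℕ) (p : ℝ) (x : ℕ) : ℝ[X] :=
  (1 + X) ^ (N - x) * (1 + X - C p⁻¹ * X) ^ x

lemma krawtchoukGenFun_eq_sum {N x : ℕ} (p : ℝ) (hx : x ≤ N) :
    krawtchoukGenFun N p x =
      ∑ a ∈ range (x + 1), C (x.choose a * (-p⁻¹) ^ a) * (X ^ a * (1 + X) ^ (N - a)) := by
  have hsplit : (1 + X - C p⁻¹ * X : ℝ[X]) = C (-p⁻¹) * X + (1 + X) := by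
    rw [map_neg]; ring
  rw [krawtchoukGenFun, hsplit, add_pow (C (-p⁻¹) * X) (1 + X) x, mul_sum]
  refine sum_congr rfl fun a ha => ?_
  have hax : a ≤ x := mem_range_succ_iff.mp ha
  rw [show N - a = (N - x) + (x - a) by omega, pow_add, map_mul, map_pow, ← C_eq_natCast]
  ring

lemma coeff_krawtchoukGenFun {N x : ℕ} (p : ℝ) (hx : x ≤ N) (n : ℕ) :
    (krawtchoukGenFun N p x).coeff n = N.choose n * krawtchouk N p n x := by
  have hvanish : ∀ a ∈ range (N + 1), a ∉ range (x + 1) →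
      (N.choose n : ℝ) * ((-p⁻¹) ^ a * n.choose a * x.choose a / N.choose a) = 0 := by
    intro a _ ha
    rw [Nat.choose_eq_zero_of_lt (n := x) (by simpa using ha)]
    simp
  rw [krawtchoukGenFun_eq_sum p hx, krawtchouk_eq_sum_choose, mul_sum, finsetSum_coeff,
    ← sum_subset (range_subset_range.mpr (by omega)) hvanish]
  refine sum_congr rfl fun a ha => ?_
  have haN : a ≤ N := by have := mem_range.mp ha; omega
  have hNa : (N.choose a : ℝ) ≠ 0 := by exact_mod_cast (Nat.choose_pos haN).ne'
  rw [coeff_C_mul, coeff_X_pow_mul', coeff_one_add_X_pow]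
  split_ifs with han
  · have hchoose : (N.choose n * n.choose a : ℝ) / N.choose a = (N - a).choose (n - a) := by
      rw [div_eq_iff hNa]
      exact_mod_cast (Nat.choose_mul han).trans (mul_comm _ _)
    rw [← hchoose]
    ring
  · rw [Nat.choose_eq_zero_of_lt (by omega : n < a)]
    simp

lemma sum_binomial_mul_krawtchoukGenFun (N : ℕ) {p q : ℝ} (hp : p ≠ 0) (hpq : p + q = 1) :
    ∑ x ∈ range (N + 1), C (C (N.choose x * p ^ x * q ^ (N - x))) *
        (C (krawtchoukGenFun N p x) * (krawtchoukGenFun N p x).map C) =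
      (1 + C (C (q / p) * X) * X) ^ N := by
  have hsum : (C (C p) + C (C q) : ℝ[X][X]) = 1 := by
    rw [← map_add, ← map_add, hpq, map_one, map_one]
  have hinv : (C (C p) * C (C p⁻¹) : ℝ[X][X]) = 1 := by
    rw [← map_mul, ← map_mul, mul_inv_cancel₀ hp, map_one, map_one]
  set u : ℝ[X][X] := C X
  set z : ℝ[X][X] := X
  have hfactor : C (C p) * ((1 + u - C (C p⁻¹) * u) * (1 + z - C (C p⁻¹) * z)) +
      C (C q) * ((1 + u) * (1 + z)) = 1 + C (C (q / p) * X) * X := by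
    rw [div_eq_mul_inv, map_mul, map_mul, map_mul]
    linear_combination ((1 + u) * (1 + z) - C (C p⁻¹) * u * z) * hsum +
      ((C (C p⁻¹) + 1) * u * z - (u + z + 2 * u * z)) * hinv
  rw [← hfactor, add_pow]
  refine sum_congr rfl fun x _ => ?_
  simp only [krawtchoukGenFun, Polynomial.map_mul, Polynomial.map_pow, Polynomial.map_sub,
    Polynomial.map_add, Polynomial.map_one, Polynomial.map_X, map_C, map_mul, map_pow, map_sub,
    map_add, map_one, map_natCast, mul_pow]
  ring

lemma krawtchouk_orthogonal {N m n : ℕ} {p q : ℝ} (hp : p ≠ 0) (hpq : p + q = 1)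
    (hm : m ≤ N) (hn : n ≤ N) :
    ∑ x ∈ range (N + 1),
        N.choose x * p ^ x * q ^ (N - x) * (krawtchouk N p m x * krawtchouk N p n x)
      = if m = n then (q / p) ^ n / N.choose n else 0 := by
  have hcoeff := congrArg (fun P : ℝ[X][X] => (P.coeff n).coeff m)
    (sum_binomial_mul_krawtchoukGenFun N hp hpq)
  simp only [finsetSum_coeff, coeff_C_mul, coeff_map, coeff_mul_C, coeff_one_add_C_mul_X_pow,
    mul_pow, ← C_pow, ← C_eq_natCast, ← mul_assoc, ← map_mul, coeff_X_pow] at hcoeff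
  have hexpand : ∑ x ∈ range (N + 1), N.choose x * p ^ x * q ^ (N - x) *
        (krawtchoukGenFun N p x).coeff m * (krawtchoukGenFun N p x).coeff n =
      (N.choose m * N.choose n) * ∑ x ∈ range (N + 1),
        N.choose x * p ^ x * q ^ (N - x) * (krawtchouk N p m x * krawtchouk N p n x) := by
    rw [mul_sum]
    refine sum_congr rfl fun x hx => ?_
    have hxN : x ≤ N := mem_range_succ_iff.mp hx
    rw [coeff_krawtchoukGenFun p hxN, coeff_krawtchoukGenFun p hxN]
    ring
  have hNm : (N.choose m : ℝ) ≠ 0 := by exact_mod_cast (Nat.choose_pos hm).ne'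
  have hNn : (N.choose n : ℝ) ≠ 0 := by exact_mod_cast (Nat.choose_pos hn).ne'
  rw [hexpand] at hcoeff
  apply mul_left_cancel₀ (mul_ne_zero hNm hNn)
  rw [hcoeff]
  split_ifs with h
  · subst h
    field_simp
  · simp

lemma krawtchouk_dual_orthogonal {N x y : ℕ} {p q : ℝ} (hp : p ≠ 0) (hq : q ≠ 0)
    (hpq : p + q = 1) (hx : x ≤ N) (hy : y ≤ N) :
    ∑ k ∈ range (N + 1), N.choose k * (p / q) ^ k * (krawtchouk N p k x * krawtchouk N p k y)
      = if x = y then (N.choose x * p ^ x * q ^ (N - x))⁻¹ else 0 := by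
  have hpow : ∀ k ≤ N, q ^ N = q ^ (N - k) * q ^ k := fun k hk => by
    rw [← pow_add, Nat.sub_add_cancel hk]
  have hrescale : ∑ k ∈ range (N + 1), N.choose k * (p / q) ^ k *
        (krawtchouk N p k x * krawtchouk N p k y) =
      (q ^ N)⁻¹ * ∑ k ∈ range (N + 1), N.choose k * p ^ k * q ^ (N - k) *
        (krawtchouk N p x k * krawtchouk N p y k) := by
    rw [mul_sum]
    refine sum_congr rfl fun k hk => ?_
    rw [krawtchouk_comm N p k x, krawtchouk_comm N p k y,
      hpow k (mem_range_succ_iff.mp hk), div_pow]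
    field_simp
  rw [hrescale, krawtchouk_orthogonal hp hpq hx hy]
  split_ifs with h
  · subst h
    rw [hpow x hx, div_pow]
    field_simp
  · rw [mul_zero]

theorem chapman_kolmogorov_of_dual_orthogonal {N : ℕ} (w ρ : ℕ → ℝ) (K : ℕ → ℕ → ℝ)
    (e : ℕ → ℝ → ℝ) (hw : ∀ x ≤ N, w x ≠ 0)
    (hdual : ∀ x ≤ N, ∀ y ≤ N,
      ∑ k ∈ range (N + 1), ρ k * (K k x * K k y) = if x = y then (w x)⁻¹ else 0)
    (he : ∀ x s t, e x (s + t) = e x s * e x t) (i j : ℕ) (s t : ℝ) :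
    ρ j * ∑ x ∈ range (N + 1), w x * K i x * K j x * e x (s + t) =
      ∑ k ∈ range (N + 1), (ρ k * ∑ x ∈ range (N + 1), w x * K i x * K k x * e x s) *
        (ρ j * ∑ y ∈ range (N + 1), w y * K k y * K j y * e y t) := by
  symm
  calc _ = ρ j * ∑ x ∈ range (N + 1), ∑ y ∈ range (N + 1),
        (w x * K i x * e x s) * (w y * K j y * e y t) *
          ∑ k ∈ range (N + 1), ρ k * (K k x * K k y) := by
        simp only [mul_sum, sum_mul]
        refine (sum_comm.trans <| sum_congr rfl fun _ _ => sum_comm).trans <| sum_comm.trans <|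
          sum_congr rfl fun x _ => sum_congr rfl fun y _ => sum_congr rfl fun k _ => by ring
    _ = ρ j * ∑ x ∈ range (N + 1), ∑ y ∈ range (N + 1),
        (w x * K i x * e x s) * (w y * K j y * e y t) * if x = y then (w x)⁻¹ else 0 := by
        refine congrArg _ (sum_congr rfl fun x hx => sum_congr rfl fun y hy => ?_)
        rw [hdual x (mem_range_succ_iff.mp hx) y (mem_range_succ_iff.mp hy)]
    _ = _ := by
        simp only [mul_ite, mul_zero, sum_ite_eq]
        refine congrArg _ (sum_congr rfl fun x hx => ?_)
        have := hw x (mem_range_succ_iff.mp hx)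
        rw [if_pos hx, he]
        field_simp

theorem ehrenfest_chapman_kolmogorov_general (N : ℕ) (lam α β : ℝ)
    (hα : α ∈ Set.Ioc (0 : ℝ) 1) (hβ : β ∈ Set.Ioc (0 : ℝ) 1)
    (p q : ℝ) (hp : p = α / (α + β)) (hq : q = 1 - p)
    (i j : ℕ) (s t : ℝ) :
    ehrenfestP N p q lam α β i j (s + t) =
      ∑ k ∈ Finset.range (N + 1),
        ehrenfestP N p q lam α β i k s * ehrenfestP N p q lam α β k j t := by
  have hαβ : 0 < α + β := add_pos hα.1 hβ.1
  have hp0 : 0 < p := hp ▸ div_pos hα.1 hαβ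
  have hq0 : 0 < q := by
    rw [hq, hp, sub_pos, div_lt_one hαβ]
    linarith [hβ.1]
  have hpq : p + q = 1 := by rw [hq]; ring
  exact chapman_kolmogorov_of_dual_orthogonal (fun x => N.choose x * p ^ x * q ^ (N - x))
    (fun k => N.choose k * (p / q) ^ k) (krawtchouk N p)
    (fun x t => Real.exp (-(lam * (α + β) * x * t)))
    (fun x hx => by have := Nat.choose_pos hx; positivity)
    (fun x hx y hy => krawtchouk_dual_orthogonal hp0.ne' hq0.ne' hpq hx hy)
    (fun x s t => by rw [← Real.exp_add]; ring_nf) i j s t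

/-- Semigroup (Chapman–Kolmogorov) property of the Ehrenfest transition probabilities. -/
theorem ehrenfest_chapman_kolmogorov (N : ℕ) (lam α β : ℝ) (hlam : 0 < lam)
    (hα : α ∈ Set.Ioc (0 : ℝ) 1) (hβ : β ∈ Set.Ioc (0 : ℝ) 1)
    (p q : ℝ) (hp : p = α / (α + β)) (hq : q = 1 - p)
    (i j : ℕ) (hi : i ≤ N) (hj : j ≤ N) (s t : ℝ) (hs : 0 ≤ s) (ht : 0 ≤ t) :
    ehrenfestP N p q lam α β i j (s + t) =
      ∑ k ∈ Finset.range (N + 1),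
        ehrenfestP N p q lam α β i k s * ehrenfestP N p q lam α β k j t :=
  ehrenfest_chapman_kolmogorov_general N lam α β hα hβ p q hp hq i j s t
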